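/- Let Δ(t) be a polynomial with alternating coefficients, Δ(1) = 1, and let a ≥ deg Δ. Then Σ over nontrivial a-th roots of unity ξ of Δ(ξ)Δ(ξ̄)/((1-ξ)(1-ξ̄)) = (a²-1)/12 + Δ'(1) − Δ'(1)² + Δ''(1). -/

import Mathlib

/-!
Write `Δ = 1 + (t - 1) R`. The coefficient of `t^k` in `R` is the tail sum `∑_{j > k} Δ_j`, which
alternating coefficients force into `{0, 1}`; moreover `Δ'(1) = R(1)` and `Δ''(1) = 2 R'(1)`.
For a nontrivial `a`-th root of unity `ξ` one has `1 / (1 - ξ) = -(1/a) ∑_{k < a} k ξ^k`, so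
`Δ(ξ) / (1 - ξ) = ∑_{k < a} u_k ξ^k` with `u_k = -k/a - R_k`. Orthogonality of the characters
`ξ ↦ ξ^k` turns the sum into `a ∑ u_k² - (∑ u_k)²`, and `R_k² = R_k` makes this the closed form.
-/

/-- A polynomial has alternating coefficients: each coefficient lies in {-1,0,1} and
a nonzero coefficient equals `(-1)^(number of nonzero coefficients above it)`. -/
def AlternatingCoeffs (Δ : Polynomial ℤ) : Prop :=
  ∀ i : ℕ, Δ.coeff i ∈ ({-1, 0, 1} : Set ℤ) ∧
    (Δ.coeff i ≠ 0 → Δ.coeff i = (-1) ^ ((Δ.support.filter (fun j => i < j)).card))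

open Finset Polynomial

theorem sum_neg_one_pow_card_filter_lt {α : Type*} [LinearOrder α] (t : Finset α) :
    ∑ j ∈ t, (-1 : ℤ) ^ #{x ∈ t | j < x} = if Even #t then 0 else 1 := by
  induction t using Finset.induction_on_max with
  | empty => simp
  | insert m s hms ih =>
    have hm : m ∉ s := fun h => lt_irrefl m (hms m h)
    have htop : #{x ∈ insert m s | m < x} = 0 := by
      rw [card_eq_zero, filter_eq_empty_iff]
      intro x hx
      rcases mem_insert.1 hx with rfl | hx
      · exact lt_irrefl x
      · exact (hms x hx).not_gt
    have hbelow : ∀ j ∈ s, #{x ∈ insert m s | j < x} = #{x ∈ s | j < x} + 1 := fun j hj => by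
      rw [filter_insert, if_pos (hms j hj), card_insert_of_notMem fun h => hm (mem_filter.1 h).1]
    rw [sum_insert hm, htop, sum_congr rfl fun j hj => by rw [hbelow j hj, pow_succ], ← sum_mul,
      ih, card_insert_of_notMem hm]
    by_cases h : Even #s <;> simp [h, Nat.even_add_one]

theorem AlternatingCoeffs.sum_coeff_gt {Δ : ℤ[X]} (hΔ : AlternatingCoeffs Δ) (k : ℕ) :
    ∑ j ∈ Δ.support with k < j, Δ.coeff j = if Even #{j ∈ Δ.support | k < j} then 0 else 1 := by
  rw [← sum_neg_one_pow_card_filter_lt]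
  refine sum_congr rfl fun j hj => ?_
  obtain ⟨hj, hkj⟩ := mem_filter.1 hj
  rw [(hΔ j).2 (mem_support_iff.1 hj), filter_filter]
  congr 2
  exact filter_congr fun x _ => ⟨fun hjx => ⟨hkj.trans hjx, hjx⟩, And.right⟩

theorem AlternatingCoeffs.coeff_divByMonic_X_sub_C_one {Δ : ℤ[X]} (hΔ : AlternatingCoeffs Δ)
    (k : ℕ) : (Δ /ₘ (X - C 1)).coeff k = 0 ∨ (Δ /ₘ (X - C 1)).coeff k = 1 := by
  have htail : (Δ /ₘ (X - C 1)).coeff k = ∑ j ∈ Δ.support with k < j, Δ.coeff j := by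
    rw [coeff_divByMonic_X_sub_C]
    simp only [one_pow, one_mul]
    refine (sum_subset (fun j hj => ?_) fun j hj hj' => ?_).symm
    · obtain ⟨hj, hkj⟩ := mem_filter.1 hj
      exact mem_Icc.2 ⟨hkj, le_natDegree_of_mem_supp j hj⟩
    · by_contra h
      exact hj' (mem_filter.2 ⟨mem_support_iff.2 h, (mem_Icc.1 hj).1⟩)
  rw [htail, hΔ.sum_coeff_gt]
  split <;> simp

namespace Polynomial

variable {R : Type*} [CommRing R]

theorem eval_derivative_C_add_X_sub_C_mul (c x : R) (r : R[X]) :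
    (derivative (C c + (X - C x) * r)).eval x = r.eval x := by
  simp

theorem eval_derivative_derivative_C_add_X_sub_C_mul (c x : R) (r : R[X]) :
    (derivative (derivative (C c + (X - C x) * r))).eval x = 2 * (derivative r).eval x := by
  simp [two_mul]

theorem eval_one_eq_sum_range' {p : R[X]} {n : ℕ} (hp : p.natDegree < n) :
    p.eval 1 = ∑ k ∈ range n, p.coeff k := by
  simp [eval_eq_sum_range' hp]

theorem eval_one_derivative_eq_sum_range' {p : R[X]} {n : ℕ} (hp : p.natDegree < n) :
    (derivative p).eval 1 = ∑ k ∈ range n, k * p.coeff k := by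
  rw [derivative_eval, sum_over_range' _ (by simp) n hp]
  simp [mul_comm]

end Polynomial

theorem sum_range_cast_mul_two {R : Type*} [CommRing R] (n : ℕ) :
    (∑ k ∈ range n, (k : R)) * 2 = n * (n - 1) := by
  induction n with
  | zero => simp
  | succ n ih => rw [sum_range_succ]; push_cast; linear_combination ih

theorem sum_range_cast_sq_mul_six {R : Type*} [CommRing R] (n : ℕ) :
    (∑ k ∈ range n, (k : R) ^ 2) * 6 = n * (n - 1) * (2 * n - 1) := by
  induction n with
  | zero => simp
  | succ n ih => rw [sum_range_succ]; push_cast; linear_combination ih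

theorem sum_range_cast_mul_pow_mul_one_sub {R : Type*} [CommRing R] (x : R) (n : ℕ) :
    (∑ k ∈ range n, (k : R) * x ^ k) * (1 - x) = x * ∑ k ∈ range n, x ^ k - n * x ^ n := by
  induction n with
  | zero => simp
  | succ n ih => rw [sum_range_succ, sum_range_succ, add_mul, ih]; push_cast; ring

section RootOfUnity

variable {K : Type*} [Field K] {n : ℕ}

theorem inv_one_sub_eq_of_pow_eq_one (hn : (n : K) ≠ 0) {x : K} (hx : x ^ n = 1) (hx1 : x ≠ 1) :
    (1 - x)⁻¹ = -(n : K)⁻¹ * ∑ k ∈ range n, (k : K) * x ^ k := by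
  have hgeom : ∑ k ∈ range n, x ^ k = 0 := by rw [geom_sum_eq hx1, hx, sub_self, zero_div]
  have h := sum_range_cast_mul_pow_mul_one_sub x n
  rw [hgeom, hx, mul_zero, mul_one, zero_sub] at h
  refine inv_eq_of_mul_eq_one_right ?_
  rw [mul_left_comm, mul_comm (1 - x), h]
  field_simp

theorem one_add_sub_one_mul_div_one_sub_of_pow_eq_one (hn : (n : K) ≠ 0) {x : K} (hx : x ^ n = 1)
    (hx1 : x ≠ 1) (c : ℕ → K) :
    (1 + (x - 1) * ∑ k ∈ range n, c k * x ^ k) / (1 - x)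
      = ∑ k ∈ range n, (-(k / n) - c k) * x ^ k := by
  have h1x : 1 - x ≠ 0 := sub_ne_zero.2 (Ne.symm hx1)
  have hsplit : (1 + (x - 1) * ∑ k ∈ range n, c k * x ^ k) / (1 - x)
      = (1 - x)⁻¹ - ∑ k ∈ range n, c k * x ^ k := by
    field_simp; ring
  rw [hsplit, inv_one_sub_eq_of_pow_eq_one hn hx hx1, mul_sum, ← sum_sub_distrib]
  exact sum_congr rfl fun k _ => by ring

namespace IsPrimitiveRoot

variable {ζ : K}

theorem nthRootsFinset_one_eq_image [DecidableEq K] (hζ : IsPrimitiveRoot ζ n) :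
    nthRootsFinset n (1 : K) = (range n).image (ζ ^ ·) := by
  rcases Nat.eq_zero_or_pos n with rfl | hn
  · simp
  have : NeZero n := ⟨hn.ne'⟩
  ext ξ
  simp only [Polynomial.mem_nthRootsFinset hn, mem_image, mem_range]
  refine ⟨hζ.eq_pow_of_pow_eq_one, ?_⟩
  rintro ⟨i, -, rfl⟩
  rw [← pow_mul, mul_comm, pow_mul, hζ.pow_eq_one, one_pow]

theorem sum_nthRootsFinset_one (hζ : IsPrimitiveRoot ζ n) {M : Type*} [AddCommMonoid M]
    (f : K → M) : ∑ ξ ∈ nthRootsFinset n (1 : K), f ξ = ∑ i ∈ range n, f (ζ ^ i) := by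
  classical
  rw [hζ.nthRootsFinset_one_eq_image, sum_image fun i hi j hj h =>
    hζ.pow_inj (mem_range.1 hi) (mem_range.1 hj) h]

theorem sum_nthRootsFinset_pow_mul_inv_pow (hζ : IsPrimitiveRoot ζ n) {k l : ℕ} (hk : k < n)
    (hl : l < n) :
    ∑ ξ ∈ nthRootsFinset n (1 : K), ξ ^ k * ξ⁻¹ ^ l = if k = l then (n : K) else 0 := by
  have hζ0 : ζ ≠ 0 := hζ.ne_zero (by omega)
  set w := ζ ^ k * (ζ ^ l)⁻¹
  have hw : ∀ i, (ζ ^ i) ^ k * (ζ ^ i)⁻¹ ^ l = w ^ i := fun i => by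
    rw [mul_pow, inv_pow, inv_pow, ← pow_mul, ← pow_mul, ← pow_mul, ← pow_mul, mul_comm i,
      mul_comm i]
  rw [hζ.sum_nthRootsFinset_one, sum_congr rfl fun i _ => hw i]
  split_ifs with hkl
  · simp [w, hkl, hζ0]
  · have hw1 : w ≠ 1 := fun h =>
      hkl (hζ.pow_inj hk hl (mul_inv_eq_one₀ (pow_ne_zero l hζ0) |>.1 h))
    have hwn : w ^ n = 1 := by
      rw [mul_pow, inv_pow, ← pow_mul, ← pow_mul, mul_comm k, mul_comm l, pow_mul, pow_mul,
        hζ.pow_eq_one, one_pow, one_pow, inv_one, mul_one]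
    rw [geom_sum_eq hw1, hwn, sub_self, zero_div]

theorem sum_nthRootsFinset_mul_sum (hζ : IsPrimitiveRoot ζ n) (u v : ℕ → K) :
    ∑ ξ ∈ nthRootsFinset n (1 : K),
        (∑ k ∈ range n, u k * ξ ^ k) * (∑ l ∈ range n, v l * ξ⁻¹ ^ l)
      = n * ∑ k ∈ range n, u k * v k := by
  calc _ = ∑ k ∈ range n, ∑ l ∈ range n,
        u k * v l * ∑ ξ ∈ nthRootsFinset n (1 : K), ξ ^ k * ξ⁻¹ ^ l := by
        simp_rw [sum_mul_sum, mul_sum]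
        rw [sum_comm]
        refine sum_congr rfl fun k _ => ?_
        rw [sum_comm]
        exact sum_congr rfl fun l _ => sum_congr rfl fun ξ _ => by ring
    _ = ∑ k ∈ range n, ∑ l ∈ range n, u k * v l * if k = l then (n : K) else 0 :=
        sum_congr rfl fun k hk => sum_congr rfl fun l hl => by
          rw [hζ.sum_nthRootsFinset_pow_mul_inv_pow (mem_range.1 hk) (mem_range.1 hl)]
    _ = n * ∑ k ∈ range n, u k * v k := by
        simp only [mul_ite, mul_zero, sum_ite_eq, mem_range]
        rw [mul_sum]
        exact sum_congr rfl fun k hk => by rw [if_pos (mem_range.1 hk)]; ring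

theorem sum_nthRootsFinset_erase_one_mul_sum [DecidableEq K] (hζ : IsPrimitiveRoot ζ n)
    (u v : ℕ → K) :
    ∑ ξ ∈ (nthRootsFinset n (1 : K)).erase 1,
        (∑ k ∈ range n, u k * ξ ^ k) * (∑ l ∈ range n, v l * ξ⁻¹ ^ l)
      = n * ∑ k ∈ range n, u k * v k - (∑ k ∈ range n, u k) * (∑ l ∈ range n, v l) := by
  rcases Nat.eq_zero_or_pos n with rfl | hn
  · simp
  rw [sum_erase_eq_sub (one_mem_nthRootsFinset hn), hζ.sum_nthRootsFinset_mul_sum]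
  simp

end IsPrimitiveRoot

end RootOfUnity

theorem natCast_mul_sum_mul_self_sub_sum_mul_sum {K : Type*} [Field K] [CharZero K] {n : ℕ}
    (hn : n ≠ 0) (c : ℕ → K) (hc : ∀ k, IsIdempotentElem (c k)) :
    n * ∑ k ∈ range n, (-(k / n) - c k) * (-(k / n) - c k)
        - (∑ k ∈ range n, (-(k / n) - c k)) * (∑ k ∈ range n, (-(k / n) - c k))
      = ((n : K) ^ 2 - 1) / 12 + ∑ k ∈ range n, c k - (∑ k ∈ range n, c k) ^ 2
        + 2 * ∑ k ∈ range n, k * c k := by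
  have hn' : (n : K) ≠ 0 := Nat.cast_ne_zero.2 hn
  have hsq : ∑ k ∈ range n, (-(k / n) - c k) * (-(k / n) - c k)
      = (∑ k ∈ range n, (k : K) ^ 2) / n ^ 2 + 2 * (∑ k ∈ range n, k * c k) / n
        + ∑ k ∈ range n, c k := by
    rw [sum_div, mul_sum, sum_div, ← sum_add_distrib, ← sum_add_distrib]
    exact sum_congr rfl fun k _ => by linear_combination (hc k).eq
  have hlin : ∑ k ∈ range n, (-(k / n) - c k) = -((∑ k ∈ range n, (k : K)) / n)
      - ∑ k ∈ range n, c k := by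
    rw [sum_sub_distrib, sum_neg_distrib, sum_div]
  have hid : ∑ k ∈ range n, (k : K) = n * (n - 1) / 2 := by
    rw [eq_div_iff two_ne_zero]; exact sum_range_cast_mul_two n
  have hsq_id : ∑ k ∈ range n, (k : K) ^ 2 = n * (n - 1) * (2 * n - 1) / 6 := by
    rw [eq_div_iff (by norm_num)]; exact sum_range_cast_sq_mul_six n
  rw [hsq, hlin, hid, hsq_id]
  field_simp
  ring

theorem sum_alexander_over_nontrivial_roots (Δ : Polynomial ℤ)
    (hΔ : AlternatingCoeffs Δ) (h1 : Δ.eval 1 = 1)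
    (a : ℕ) (ha : 0 < a) (hdeg : Δ.natDegree ≤ a) :
    ∑ ξ ∈ (Polynomial.nthRootsFinset a (1 : ℂ)).erase 1,
        (Polynomial.aeval ξ Δ) * (Polynomial.aeval ξ⁻¹ Δ) / ((1 - ξ) * (1 - ξ⁻¹))
      = ((a : ℂ) ^ 2 - 1) / 12 + ((Δ.derivative.eval 1 : ℤ) : ℂ)
        - ((Δ.derivative.eval 1 : ℤ) : ℂ) ^ 2
        + ((Δ.derivative.derivative.eval 1 : ℤ) : ℂ) := by
  have hq := hΔ.coeff_divByMonic_X_sub_C_one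
  set R := Δ /ₘ (X - C 1)
  have hΔR : Δ = C 1 + (X - C 1) * R := by
    have h := modByMonic_add_div Δ (X - C 1)
    rw [modByMonic_X_sub_C_eq_C_eval, h1] at h
    exact h.symm
  have hR : R.natDegree < a := by
    rw [natDegree_divByMonic _ (monic_X_sub_C 1), natDegree_X_sub_C]; omega
  have hfactor : ∀ x : ℂ, x ^ a = 1 → x ≠ 1 →
      aeval x Δ / (1 - x) = ∑ k ∈ range a, (-(k / a) - (R.coeff k : ℂ)) * x ^ k := by
    intro x hx hx1
    rw [← one_add_sub_one_mul_div_one_sub_of_pow_eq_one (by exact_mod_cast ha.ne') hx hx1,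
      hΔR, aeval_add, aeval_mul, aeval_eq_sum_range' hR]
    simp [zsmul_eq_mul]
  have hsummand : ∀ ξ ∈ (nthRootsFinset a (1 : ℂ)).erase 1,
      aeval ξ Δ * aeval ξ⁻¹ Δ / ((1 - ξ) * (1 - ξ⁻¹))
        = (∑ k ∈ range a, (-(k / a) - (R.coeff k : ℂ)) * ξ ^ k)
          * ∑ k ∈ range a, (-(k / a) - (R.coeff k : ℂ)) * ξ⁻¹ ^ k := by
    intro ξ hξ
    obtain ⟨hξ1, hξ⟩ := mem_erase.1 hξ
    rw [Polynomial.mem_nthRootsFinset ha] at hξ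
    rw [mul_div_mul_comm, hfactor ξ hξ hξ1, hfactor ξ⁻¹ (by rw [inv_pow, hξ, inv_one])
      (inv_ne_one.2 hξ1)]
  have hζ := Complex.isPrimitiveRoot_exp a ha.ne'
  rw [sum_congr rfl hsummand, hζ.sum_nthRootsFinset_erase_one_mul_sum, hΔR,
    eval_derivative_C_add_X_sub_C_mul, eval_derivative_derivative_C_add_X_sub_C_mul,
    eval_one_eq_sum_range' hR, eval_one_derivative_eq_sum_range' hR]
  push_cast
  refine natCast_mul_sum_mul_self_sub_sum_mul_sum ha.ne' _ fun k => ?_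
  rcases hq k with h | h <;> simp [h, IsIdempotentElem]
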